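/- arXiv:1909.00922 — 4 statements merged into one kernel-verified Lean document; each statement's English description precedes it below -/
import Mathlib

section
/- Let P^1,...,P^n ∈ M_n(R) be rank-one orthogonal projections with P^j P^k = δ_{jk} P^j, and let P be a rank-one orthogonal projection such that ⟨P, P^j⟩ [P, P^j] = 0 for every j = 1,...,n, where Σ_k P^k = I. Then P equals one of the P^j. -/
open Matrix BigOperators

private lemma trace_eq_sum_sq {n : ℕ} {R : Matrix (Fin n) (Fin n) ℝ}
    (hs : Rᵀ = R) (hi : R * R = R) :
    R.trace = ∑ j, ∑ i, (R i j) ^ 2 := by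
  have h : R.trace = (Rᵀ * R).trace := by rw [hs, hi]
  rw [h]
  simp [Matrix.trace, Matrix.mul_apply, Matrix.diag, sq]

private lemma trace_nonneg_of_proj {n : ℕ} {R : Matrix (Fin n) (Fin n) ℝ}
    (hs : Rᵀ = R) (hi : R * R = R) : 0 ≤ R.trace := by
  rw [trace_eq_sum_sq hs hi]
  positivity

private lemma eq_zero_of_trace_zero {n : ℕ} {R : Matrix (Fin n) (Fin n) ℝ}
    (hs : Rᵀ = R) (hi : R * R = R) (ht : R.trace = 0) : R = 0 := by
  rw [trace_eq_sum_sq hs hi] at ht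
  have h := (Finset.sum_eq_zero_iff_of_nonneg (fun j _ => Finset.sum_nonneg
    (fun i _ => sq_nonneg (R i j)))).mp ht
  ext i j
  have h2 := (Finset.sum_eq_zero_iff_of_nonneg (fun i _ => sq_nonneg (R i j))).mp
    (h j (Finset.mem_univ j)) i (Finset.mem_univ i)
  simpa using pow_eq_zero_iff (n := 2) (by norm_num) |>.mp h2

private lemma eq_zero_of_frob_zero {n : ℕ} {A : Matrix (Fin n) (Fin n) ℝ}
    (h : (Aᵀ * A).trace = 0) : A = 0 := by
  have : (Aᵀ * A).trace = ∑ j, ∑ i, (A i j) ^ 2 := by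
    simp [Matrix.trace, Matrix.mul_apply, Matrix.diag, sq]
  rw [this] at h
  have h2 := (Finset.sum_eq_zero_iff_of_nonneg (fun j _ => Finset.sum_nonneg
    (fun i _ => sq_nonneg (A i j)))).mp h
  ext i j
  have h3 := (Finset.sum_eq_zero_iff_of_nonneg (fun i _ => sq_nonneg (A i j))).mp
    (h2 j (Finset.mem_univ j)) i (Finset.mem_univ i)
  simpa using pow_eq_zero_iff (n := 2) (by norm_num) |>.mp h3

private lemma one_le_trace_of_proj {n : ℕ} {R : Matrix (Fin n) (Fin n) ℝ}
    (hs : Rᵀ = R) (hi : R * R = R) (h0 : R ≠ 0) : 1 ≤ R.trace := by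
  have hsym : ∀ a b, R a b = R b a := fun a b => by
    conv_lhs => rw [← hs]
    exact Matrix.transpose_apply R a b
  obtain ⟨i, j, hij⟩ : ∃ i j, R i j ≠ 0 := by
    by_contra h
    push_neg at h
    exact h0 (by ext a b; simpa using h a b)
  set x : Fin n → ℝ := fun k => R k j with hxdef
  have hxfix : ∀ k, ∑ l, R k l * x l = x k := by
    intro k
    have := congrFun (congrFun hi k) j
    simpa [Matrix.mul_apply, hxdef] using this
  have hxfix' : ∀ k, ∑ l, x l * R l k = x k := by
    intro k
    have h1 : ∑ l, x l * R l k = ∑ l, R k l * x l :=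
      Finset.sum_congr rfl fun l _ => by rw [hsym l k]; ring
    rw [h1, hxfix]
  set s : ℝ := ∑ k, x k * x k with hsdef
  have hspos : 0 < s := by
    have h1 : 0 < x i * x i := mul_self_pos.mpr hij
    have h2 : x i * x i ≤ s := Finset.single_le_sum
      (fun k _ => mul_self_nonneg (x k)) (Finset.mem_univ i)
    linarith
  set Q : Matrix (Fin n) (Fin n) ℝ := Matrix.of (fun a b => s⁻¹ * (x a * x b)) with hQdef
  have hQs : Qᵀ = Q := by
    ext a b
    simp only [hQdef, Matrix.transpose_apply, Matrix.of_apply]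
    ring
  have hRQ : R * Q = Q := by
    ext a b
    simp only [Matrix.mul_apply, hQdef, Matrix.of_apply]
    have h1 : ∑ l, R a l * (s⁻¹ * (x l * x b)) = (s⁻¹ * x b) * ∑ l, R a l * x l := by
      rw [Finset.mul_sum]; exact Finset.sum_congr rfl fun l _ => by ring
    rw [h1, hxfix]; ring
  have hQR : Q * R = Q := by
    ext a b
    simp only [Matrix.mul_apply, hQdef, Matrix.of_apply]
    have h1 : ∑ l, (s⁻¹ * (x a * x l)) * R l b = (s⁻¹ * x a) * ∑ l, x l * R l b := by
      rw [Finset.mul_sum]; exact Finset.sum_congr rfl fun l _ => by ring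
    rw [h1, hxfix']; ring
  have hQQ : Q * Q = Q := by
    ext a b
    simp only [Matrix.mul_apply, hQdef, Matrix.of_apply]
    have h1 : ∑ l, (s⁻¹ * (x a * x l)) * (s⁻¹ * (x l * x b))
        = (s⁻¹ * s⁻¹ * x a * x b) * ∑ l, x l * x l := by
      rw [Finset.mul_sum]; exact Finset.sum_congr rfl fun l _ => by ring
    rw [h1, ← hsdef]
    field_simp
  have hQtr : Q.trace = 1 := by
    have : Q.trace = s⁻¹ * ∑ k, x k * x k := by
      simp [Matrix.trace, Matrix.diag, hQdef, Finset.mul_sum]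
    rw [this, ← hsdef, inv_mul_cancel₀ hspos.ne']
  have hdiff_s : (R - Q)ᵀ = R - Q := by rw [Matrix.transpose_sub, hs, hQs]
  have hdiff_i : (R - Q) * (R - Q) = R - Q := by
    rw [Matrix.sub_mul, Matrix.mul_sub, Matrix.mul_sub, hi, hRQ, hQR, hQQ]
    abel
  have := trace_nonneg_of_proj hdiff_s hdiff_i
  rw [Matrix.trace_sub, hQtr] at this
  linarith

theorem stmt11 (n : ℕ) (P : Matrix (Fin n) (Fin n) ℝ)
    (Pf : Fin n → Matrix (Fin n) (Fin n) ℝ)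
    (hsymf : ∀ j, (Pf j)ᵀ = Pf j)
    (hprojf : ∀ j, Pf j * Pf j = Pf j)
    (htrf : ∀ j, (Pf j).trace = 1)
    (horth : ∀ j k, Pf j * Pf k = if j = k then Pf j else 0)
    (hsum : ∑ j : Fin n, Pf j = 1)
    (hPsym : Pᵀ = P) (hPproj : P * P = P) (hPtr : P.trace = 1)
    (hcomm : ∀ j, ((Pf j)ᵀ * P).trace • (P * Pf j - Pf j * P) = 0) :
    ∃ j, P = Pf j := by
  -- c j = trace (Pf j * P)
  set c : Fin n → ℝ := fun j => (Pf j * P).trace with hcdef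
  -- Step A: P commutes with every Pf j
  have hcommute : ∀ j, P * Pf j = Pf j * P := by
    intro j
    have h := hcomm j
    rw [hsymf j] at h
    rcases smul_eq_zero.mp h with hc0 | hd
    · -- c j = 0 : show both products are zero
      have hA : P * Pf j = 0 := by
        apply eq_zero_of_frob_zero
        have ht : (P * Pf j)ᵀ * (P * Pf j) = Pf j * P * Pf j := by
          rw [Matrix.transpose_mul, hsymf j, hPsym]
          rw [show Pf j * P * (P * Pf j) = Pf j * (P * P) * Pf j by
            noncomm_ring]
          rw [hPproj]
        rw [ht]
        have : (Pf j * P * Pf j).trace = (Pf j * P).trace := by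
          rw [Matrix.trace_mul_comm (Pf j * P) (Pf j), ← Matrix.mul_assoc,
            hprojf j]
        rw [this, hc0]
      have hB : Pf j * P = 0 := by
        apply eq_zero_of_frob_zero
        have ht : (Pf j * P)ᵀ * (Pf j * P) = P * Pf j * P := by
          rw [Matrix.transpose_mul, hsymf j, hPsym]
          rw [show P * Pf j * (Pf j * P) = P * (Pf j * Pf j) * P by noncomm_ring]
          rw [hprojf j]
        rw [ht, hA, Matrix.zero_mul, Matrix.trace_zero]
      rw [hA, hB]
    · exact sub_eq_zero.mp hd
  -- Step B: sum of c j equals 1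
  have hcsum : ∑ j, c j = 1 := by
    have h1 : ∑ j, c j = ((∑ j : Fin n, Pf j) * P).trace := by
      rw [Finset.sum_mul, Matrix.trace_sum]
    rw [h1, hsum, Matrix.one_mul, hPtr]
  -- pick j with c j ≠ 0
  obtain ⟨j, hj⟩ : ∃ j, c j ≠ 0 := by
    by_contra h
    push_neg at h
    rw [Finset.sum_eq_zero (fun j _ => h j)] at hcsum
    norm_num at hcsum
  set R : Matrix (Fin n) (Fin n) ℝ := P * Pf j with hRdef
  have hRs : Rᵀ = R := by
    rw [hRdef, Matrix.transpose_mul, hsymf j, hPsym, hcommute j]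
  have hRi : R * R = R := by
    rw [hRdef, show P * Pf j * (P * Pf j) = P * (Pf j * P) * Pf j by noncomm_ring,
      ← hcommute j, show P * (P * Pf j) * Pf j = (P * P) * (Pf j * Pf j) by noncomm_ring,
      hPproj, hprojf j]
  have hRtr : R.trace = c j := by
    rw [hRdef, Matrix.trace_mul_comm]
  have hR0 : R ≠ 0 := by
    intro h
    rw [h, Matrix.trace_zero] at hRtr
    exact hj hRtr.symm
  have hge1 : 1 ≤ c j := by
    rw [← hRtr]
    exact one_le_trace_of_proj hRs hRi hR0
  -- P - R is a symmetric idempotent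
  have hPR : P * R = R := by
    rw [hRdef, ← Matrix.mul_assoc, hPproj]
  have hRP : R * P = R := by
    rw [hRdef, Matrix.mul_assoc, ← hcommute j, ← Matrix.mul_assoc, hPproj]
  have hPmRs : (P - R)ᵀ = P - R := by rw [Matrix.transpose_sub, hPsym, hRs]
  have hPmRi : (P - R) * (P - R) = P - R := by
    rw [Matrix.sub_mul, Matrix.mul_sub, Matrix.mul_sub, hPproj, hPR, hRP, hRi]
    abel
  have hle1 : c j ≤ 1 := by
    have := trace_nonneg_of_proj hPmRs hPmRi
    rw [Matrix.trace_sub, hPtr, hRtr] at this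
    linarith
  have hc1 : c j = 1 := le_antisymm hle1 hge1
  have hPeqR : P = R := by
    have h0 : (P - R).trace = 0 := by
      rw [Matrix.trace_sub, hPtr, hRtr, hc1, sub_self]
    have := eq_zero_of_trace_zero hPmRs hPmRi h0
    rwa [sub_eq_zero] at this
  -- Pf j - R is a symmetric idempotent with trace 0
  have hfR : Pf j * R = R := by
    rw [hRdef, hcommute j, ← Matrix.mul_assoc, hprojf j]
  have hRf : R * Pf j = R := by
    rw [hRdef, Matrix.mul_assoc, hprojf j]
  have hfmRs : (Pf j - R)ᵀ = Pf j - R := by rw [Matrix.transpose_sub, hsymf j, hRs]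
  have hfmRi : (Pf j - R) * (Pf j - R) = Pf j - R := by
    rw [Matrix.sub_mul, Matrix.mul_sub, Matrix.mul_sub, hprojf j, hfR, hRf, hRi]
    abel
  have hfeqR : Pf j = R := by
    have h0 : (Pf j - R).trace = 0 := by
      rw [Matrix.trace_sub, htrf j, hRtr, hc1, sub_self]
    have := eq_zero_of_trace_zero hfmRs hfmRi h0
    rwa [sub_eq_zero] at this
  exact ⟨j, hPeqR.trans hfeqR.symm⟩
end

section
/- Let {P^k = a^k ⊗ a^k}_{k=1}^n be the rank-one projections of an orthonormal basis of R^n, let Q_{ij} = Σ_k a^k_i a^k_j P^k be the blocks of the associated 4-tensor, and let P = ν ⊗ ν for a unit vector ν ∈ R^n. If [P, Q_{ij}] = 0 for all i, j = 1,...,n, then P = P^k for some k; i.e., ν = ± a^k for some k. -/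
open Matrix BigOperators

theorem stmt12 (n : ℕ) (a : Fin n → Fin n → ℝ)
    (ha : ∀ k l, a k ⬝ᵥ a l = if k = l then (1 : ℝ) else 0)
    (Qb : Fin n → Fin n → Matrix (Fin n) (Fin n) ℝ)
    (hQb : ∀ i j, Qb i j = ∑ k : Fin n, (a k i * a k j) • vecMulVec (a k) (a k))
    (ν : Fin n → ℝ) (hν : ν ⬝ᵥ ν = 1)
    (hcomm : ∀ i j, vecMulVec ν ν * Qb i j = Qb i j * vecMulVec ν ν) :
    ∃ k, vecMulVec ν ν = vecMulVec (a k) (a k) ∧ (ν = a k ∨ ν = -a k) := by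
  classical
  have hnorm : ∀ k, a k ⬝ᵥ a k = 1 := by intro k; simpa using ha k k
  -- Step 1: P^m is a combination of the Qb's
  have hPm : ∀ m, ∑ i : Fin n, ∑ j : Fin n, (a m i * a m j) • Qb i j
      = vecMulVec (a m) (a m) := by
    intro m
    ext p q
    simp only [Matrix.sum_apply, Matrix.smul_apply, hQb, vecMulVec_apply, smul_eq_mul]
    have step : ∀ i : Fin n,
        ∑ j : Fin n, a m i * a m j * ∑ k : Fin n, a k i * a k j * (a k p * a k q)
          = ∑ k : Fin n, (a m i * a k i) * ((a m ⬝ᵥ a k) * (a k p * a k q)) := by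
      intro i
      simp_rw [Finset.mul_sum]
      rw [Finset.sum_comm]
      refine Finset.sum_congr rfl fun k _ => ?_
      rw [dotProduct, Finset.sum_mul, Finset.mul_sum]
      exact Finset.sum_congr rfl fun j _ => by ring
    simp_rw [step]
    simp only [ha, ite_mul, one_mul, zero_mul, mul_ite, mul_zero, mul_one,
      Finset.sum_ite_eq, Finset.mem_univ, if_true]
    rw [← Finset.sum_mul, show ∑ i : Fin n, a m i * a m i = 1 from by
      simpa [dotProduct] using hnorm m, one_mul]
  -- Step 2: P commutes with each P^m
  have hcommP : ∀ m, vecMulVec ν ν * vecMulVec (a m) (a m)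
      = vecMulVec (a m) (a m) * vecMulVec ν ν := by
    intro m
    rw [← hPm m, Finset.sum_mul, Matrix.mul_sum]
    refine Finset.sum_congr rfl fun i _ => ?_
    rw [Finset.sum_mul, Matrix.mul_sum]
    refine Finset.sum_congr rfl fun j _ => ?_
    rw [Matrix.mul_smul, Matrix.smul_mul, hcomm]
  -- entrywise form
  have hE : ∀ m p q, ν p * (ν ⬝ᵥ a m) * a m q = a m p * (a m ⬝ᵥ ν) * ν q := by
    intro m p q
    have := congrFun (congrFun (hcommP m) p) q
    simp only [Matrix.mul_apply, vecMulVec_apply] at this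
    calc ν p * (ν ⬝ᵥ a m) * a m q
        = ∑ r : Fin n, ν p * ν r * (a m r * a m q) := by
          rw [dotProduct, Finset.mul_sum, Finset.sum_mul]
          exact Finset.sum_congr rfl fun r _ => by ring
      _ = ∑ r : Fin n, a m p * a m r * (ν r * ν q) := this
      _ = a m p * (a m ⬝ᵥ ν) * ν q := by
          rw [dotProduct, Finset.mul_sum, Finset.sum_mul]
          exact Finset.sum_congr rfl fun r _ => by ring
  -- there is m with ν ⬝ᵥ a m ≠ 0
  have hex : ∃ m, ν ⬝ᵥ a m ≠ 0 := by
    by_contra h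
    push_neg at h
    have hA : (Matrix.of a) * (Matrix.of a)ᵀ = 1 := by
      ext k l
      simp only [Matrix.mul_apply, Matrix.transpose_apply, Matrix.of_apply, Matrix.one_apply]
      simpa [dotProduct] using ha k l
    have hA' : (Matrix.of a)ᵀ * (Matrix.of a) = 1 := mul_eq_one_comm.mp hA
    have hzero : ν = 0 := by
      have h1 : ν ᵥ* ((Matrix.of a)ᵀ * (Matrix.of a)) = ν := by rw [hA', Matrix.vecMul_one]
      rw [← Matrix.vecMul_vecMul] at h1
      have h2 : ν ᵥ* (Matrix.of a)ᵀ = 0 := by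
        funext k
        simpa [Matrix.vecMul, dotProduct] using h k
      rw [h2, Matrix.zero_vecMul] at h1
      exact h1.symm
    rw [hzero] at hν
    simp at hν
  obtain ⟨m, hm⟩ := hex
  set c := ν ⬝ᵥ a m with hc
  -- ν = c • a m
  have hνm : ∀ p, ν p = c * a m p := by
    intro p
    have h1 : ∀ q, ν p * a m q = a m p * ν q := by
      intro q
      have := hE m p q
      rw [dotProduct_comm (a m) ν, ← hc] at this
      have h2 : c * (ν p * a m q) = c * (a m p * ν q) := by
        calc c * (ν p * a m q) = ν p * c * a m q := by ring
          _ = a m p * c * ν q := this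
          _ = c * (a m p * ν q) := by ring
      exact mul_left_cancel₀ hm h2
    calc ν p = ν p * (a m ⬝ᵥ a m) := by rw [hnorm m, mul_one]
      _ = ∑ q : Fin n, ν p * a m q * a m q := by
          rw [dotProduct, Finset.mul_sum]; exact Finset.sum_congr rfl fun q _ => by ring
      _ = ∑ q : Fin n, a m p * ν q * a m q := by
          exact Finset.sum_congr rfl fun q _ => by rw [h1 q]
      _ = c * a m p := by
          rw [hc, dotProduct, Finset.sum_mul]
          exact Finset.sum_congr rfl fun q _ => by ring
  have hc2 : c * c = 1 := by
    have : ν ⬝ᵥ ν = c * c * (a m ⬝ᵥ a m) := by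
      simp only [dotProduct]
      rw [Finset.mul_sum]
      exact Finset.sum_congr rfl fun q _ => by rw [hνm q]; ring
    rw [hν, hnorm m, mul_one] at this
    exact this.symm
  refine ⟨m, ?_, ?_⟩
  · ext p q
    simp only [vecMulVec_apply]
    rw [hνm p, hνm q]
    calc c * a m p * (c * a m q) = (c * c) * (a m p * a m q) := by ring
      _ = a m p * a m q := by rw [hc2, one_mul]
  · rcases mul_self_eq_one_iff.mp hc2 with h1 | h1
    · left; funext p; rw [hνm p, h1, one_mul]
    · right; funext p; rw [hνm p, h1]; simp
end

section
/- Let {P^k = a^k ⊗ a^k}_{k=1}^n be the rank-one projections of an orthonormal basis of R^n and let Q_{ij} = Σ_k a^k_i a^k_j P^k. Let ν ∈ S^{n-1}. If Q_{ij} ν = ν_i ν_j ν for all i, j = 1,...,n, then ν = ± a^k for some k. Conversely, if ν = ± a^k for some k, then Q_{ij} ν = ν_i ν_j ν for all i, j. -/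
open Matrix BigOperators

theorem stmt13 (n : ℕ) (a : Fin n → Fin n → ℝ)
    (ha : ∀ k l, a k ⬝ᵥ a l = if k = l then (1 : ℝ) else 0)
    (Qb : Fin n → Fin n → Matrix (Fin n) (Fin n) ℝ)
    (hQb : ∀ i j, Qb i j = ∑ k : Fin n, (a k i * a k j) • vecMulVec (a k) (a k))
    (ν : Fin n → ℝ) (hν : ν ⬝ᵥ ν = 1) :
    (∀ i j, Qb i j *ᵥ ν = (ν i * ν j) • ν) ↔ ∃ k, ν = a k ∨ ν = -a k := by
  have hQv : ∀ i j m, (Qb i j *ᵥ ν) m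
      = ∑ k, a k i * a k j * (a k ⬝ᵥ ν) * a k m := by
    intro i j m
    rw [hQb]
    simp only [Matrix.mulVec, dotProduct, Finset.sum_apply, Matrix.sum_apply,
      Matrix.smul_apply, vecMulVec_apply, smul_eq_mul, Finset.sum_mul]
    rw [Finset.sum_comm]
    refine Finset.sum_congr rfl fun k _ => ?_
    rw [Finset.mul_sum, Finset.sum_mul]
    refine Finset.sum_congr rfl fun x _ => by ring
  have hAtA : ∀ i j, (∑ k : Fin n, a k i * a k j) = if i = j then (1:ℝ) else 0 := by
    have h1 : (Matrix.of a) * (Matrix.of a)ᵀ = 1 := by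
      ext k l
      simpa [Matrix.mul_apply, dotProduct, Matrix.one_apply, Matrix.transpose_apply] using ha k l
    have h2 : (Matrix.of a)ᵀ * (Matrix.of a) = 1 := mul_eq_one_comm.mp h1
    intro i j
    have := congrFun (congrFun h2 i) j
    simpa [Matrix.mul_apply, Matrix.one_apply, Matrix.transpose_apply] using this
  have hexpand : ∀ i, ν i = ∑ k, (a k ⬝ᵥ ν) * a k i := by
    intro i
    calc ν i = ∑ j, (if i = j then (1:ℝ) else 0) * ν j := by simp
    _ = ∑ j, (∑ k, a k i * a k j) * ν j := by
        refine Finset.sum_congr rfl fun j _ => by rw [hAtA]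
    _ = ∑ k, (a k ⬝ᵥ ν) * a k i := by
        simp only [Finset.sum_mul]
        rw [Finset.sum_comm]
        refine Finset.sum_congr rfl fun k _ => ?_
        rw [dotProduct, Finset.sum_mul]
        refine Finset.sum_congr rfl fun j _ => by ring
  constructor
  · intro H
    obtain ⟨l, hl⟩ : ∃ l, a l ⬝ᵥ ν ≠ 0 := by
      by_contra hc
      push_neg at hc
      have : ν = 0 := by funext i; simp [hexpand i, hc]
      rw [this] at hν
      simp at hν
    have key : ∀ i j, a l i * a l j = ν i * ν j := by
      intro i j
      have h2 : ∀ m, ∑ k, a k i * a k j * (a k ⬝ᵥ ν) * a k m = ν i * ν j * ν m := by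
        intro m
        have := congrFun (H i j) m
        rw [hQv i j m] at this
        simpa [smul_eq_mul, mul_assoc] using this
      have h4 : a l i * a l j * (a l ⬝ᵥ ν) = ν i * ν j * (a l ⬝ᵥ ν) := by
        calc a l i * a l j * (a l ⬝ᵥ ν)
            = ∑ k, a k i * a k j * (a k ⬝ᵥ ν) * (if k = l then (1:ℝ) else 0) := by
              simp only [mul_ite, mul_one, mul_zero]
              rw [Finset.sum_ite_eq']
              simp [mul_comm]
          _ = ∑ m, (∑ k, a k i * a k j * (a k ⬝ᵥ ν) * a k m) * a l m := by
              simp only [Finset.sum_mul]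
              rw [Finset.sum_comm]
              refine Finset.sum_congr rfl fun k _ => ?_
              rw [← ha k l]
              have e1 : a k ⬝ᵥ a l = ∑ m, a k m * a l m := rfl
              rw [e1, Finset.mul_sum]
              refine Finset.sum_congr rfl fun m _ => by ring
          _ = ∑ m, (ν i * ν j * ν m) * a l m := by
              refine Finset.sum_congr rfl fun m _ => by rw [h2 m]
          _ = ν i * ν j * (a l ⬝ᵥ ν) := by
              rw [dotProduct, Finset.mul_sum]
              refine Finset.sum_congr rfl fun m _ => by ring
      exact mul_right_cancel₀ hl h4
    have hnu : ∀ i, ν i = (a l ⬝ᵥ ν) * a l i := by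
      intro i
      calc ν i = ν i * (ν ⬝ᵥ ν) := by rw [hν]; ring
      _ = ∑ j, ν i * ν j * ν j := by rw [dotProduct, Finset.mul_sum]; exact Finset.sum_congr rfl fun j _ => by ring
      _ = ∑ j, a l i * a l j * ν j := by
          refine Finset.sum_congr rfl fun j _ => by rw [key i j]
      _ = (a l ⬝ᵥ ν) * a l i := by
          rw [dotProduct, Finset.sum_mul]
          refine Finset.sum_congr rfl fun j _ => by ring
    have hc2 : (a l ⬝ᵥ ν) * (a l ⬝ᵥ ν) = 1 := by
      have h5 : ν ⬝ᵥ ν = (a l ⬝ᵥ ν) * (a l ⬝ᵥ ν) * (a l ⬝ᵥ a l) := by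
        have e1 : ν ⬝ᵥ ν = ∑ i, ν i * ν i := rfl
        have e2 : a l ⬝ᵥ a l = ∑ i, a l i * a l i := rfl
        rw [e1, e2, Finset.mul_sum]
        refine Finset.sum_congr rfl fun i _ => by rw [hnu i]; ring
      rw [hν, ha l l] at h5
      simpa using h5.symm
    refine ⟨l, ?_⟩
    rcases mul_self_eq_one_iff.mp hc2 with h | h
    · left; funext i; rw [hnu i, h]; ring
    · right; funext i; rw [hnu i, h]; simp
  · rintro ⟨k0, hk0⟩ i j
    funext m
    rw [hQv]
    rcases hk0 with h | h <;> subst h <;>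
      simp [dotProduct_neg, ha, mul_ite, mul_one, mul_zero, neg_mul, mul_neg,
        Finset.sum_ite_eq', smul_eq_mul, mul_assoc]
end

section
/- Let Q be an n²×n² real matrix that is a fully symmetric 4th-order tensor (invariant under all permutation operators T_σ, σ ∈ S₄), satisfies the trace conditions tr(Q_{ij}) = δ_{ij} on its n×n blocks, and satisfies Q² = Q. Then there exist rank-one orthogonal projections P^1,...,P^n ∈ M_n(R) with P^jP^k = δ_{jk}P^j and Σ_j P^j = I_n such that Q = Σ_{j=1}^n X(P^j) X(P^j)^T, where X: M_n(R) → R^{n²} stacks the columns of a matrix. -/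
open Matrix BigOperators

open scoped ComplexOrder

/-!
As a matrix, `Q` is symmetric, idempotent and of trace `n`, so it is the orthogonal projection
onto an `n`-dimensional subspace: `Q = Wᵀ W` for an `n × n²` matrix `W` with orthonormal rows
`X(A_k)`. Full symmetry makes every `A_k` symmetric and, together with the trace condition, gives
`∑ A_k² = I` and `∑_k A_k A_j A_k = A_j`; these force `∑_k ‖[A_k, A_j]‖² = 0`, so the `A_k`
commute. In a common orthonormal eigenbasis `v_i` we get `A_k = ∑_i λ_{ki} P_i` with
`P_i = v_i v_iᵀ`, i.e. `W = Λ V` where the rows `X(P_i)` of `V` are orthonormal too. Hence `Λ` is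
orthogonal and `Q = Wᵀ W = Vᵀ Λᵀ Λ V = Vᵀ V = ∑_i X(P_i) X(P_i)ᵀ`.
-/

theorem sum_subtype_eq_sum_mul_of_eq_zero_or_one {𝕜 ι : Type*} [RCLike 𝕜] [Fintype ι]
    {μ : ι → ℝ} (hμ : ∀ j, μ j = 0 ∨ μ j = 1) (f : ι → 𝕜) :
    ∑ j : {j // μ j = 1}, f j = ∑ j, (μ j : 𝕜) * f j := by
  rw [← Finset.sum_subtype (Finset.univ.filter fun j => μ j = 1) (by simp), Finset.sum_filter]
  refine Finset.sum_congr rfl fun j _ => ?_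
  rcases hμ j with h | h <;> simp [h]

namespace Matrix

section Spectral

variable {𝕜 ι κ : Type*} [RCLike 𝕜] [Fintype ι] [DecidableEq ι] [Fintype κ]

theorem IsHermitian.eigenvalues_eq_zero_or_one {Q : Matrix ι ι 𝕜} (hQ : Q.IsHermitian)
    (hQQ : IsIdempotentElem Q) (j : ι) : hQ.eigenvalues j = 0 ∨ hQ.eigenvalues j = 1 :=
  IsIdempotentElem.spectrum_subset ℝ hQQ (hQ.eigenvalues_mem_spectrum_real j)

theorem conjTranspose_mul_self_submatrix_eq {U : Matrix ι ι 𝕜} {μ : ι → ℝ}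
    (hμ : ∀ j, μ j = 0 ∨ μ j = 1) (e : κ ≃ {j // μ j = 1}) :
    (Uᴴ.submatrix (Subtype.val ∘ e) id)ᴴ * Uᴴ.submatrix (Subtype.val ∘ e) id =
      U * diagonal (fun j => (μ j : 𝕜)) * Uᴴ := by
  ext p q
  rw [mul_apply, mul_apply]
  simp only [conjTranspose_submatrix, conjTranspose_conjTranspose, submatrix_apply, id_eq,
    Function.comp_apply, mul_diagonal]
  refine (e.sum_comp (fun j => U p j * Uᴴ j q)).trans
    ((sum_subtype_eq_sum_mul_of_eq_zero_or_one hμ (fun j => U p j * Uᴴ j q)).trans ?_)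
  exact Finset.sum_congr rfl fun j _ => by ring

theorem IsHermitian.exists_mul_conjTranspose_eq_one [DecidableEq κ] {Q : Matrix ι ι 𝕜}
    (hQ : Q.IsHermitian) (hQQ : IsIdempotentElem Q) (hκ : Q.trace = Fintype.card κ) :
    ∃ W : Matrix κ ι 𝕜, W * Wᴴ = 1 ∧ Wᴴ * W = Q := by
  have hμ := hQ.eigenvalues_eq_zero_or_one hQQ
  obtain ⟨e⟩ : Nonempty (κ ≃ {j // hQ.eigenvalues j = 1}) := by
    refine Fintype.card_eq.mp ?_
    have := sum_subtype_eq_sum_mul_of_eq_zero_or_one (𝕜 := 𝕜) hμ 1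
    simp only [Pi.one_apply, Finset.sum_const, Finset.card_univ, nsmul_eq_mul, mul_one] at this
    exact_mod_cast hκ.symm.trans (hQ.trace_eq_sum_eigenvalues.trans this.symm)
  refine ⟨(hQ.eigenvectorUnitary : Matrix ι ι 𝕜)ᴴ.submatrix (Subtype.val ∘ e) id, ?_, ?_⟩
  · rw [conjTranspose_submatrix, ← submatrix_mul _ _ _ _ _ Function.bijective_id,
      conjTranspose_conjTranspose, ← star_eq_conjTranspose, Unitary.coe_star_mul_self,
      submatrix_one _ (Subtype.val_injective.comp e.injective)]
  · rw [conjTranspose_mul_self_submatrix_eq hμ e, ← star_eq_conjTranspose]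
    exact hQ.spectral_theorem.symm

end Spectral

section SimultaneousDiagonalization

variable {𝕜 ι m : Type*} [RCLike 𝕜] [Fintype m] [DecidableEq m]

theorem _root_.Commute.toEuclideanLin {A B : Matrix m m 𝕜} (h : Commute A B) :
    Commute (toEuclideanLin A) (toEuclideanLin B) := by
  change _ * _ = _ * _
  rw [Module.End.mul_eq_comp, Module.End.mul_eq_comp, ← toLpLin_mul_same, ← toLpLin_mul_same, h.eq]

theorem exists_orthonormalBasis_mulVec_eq_smul_of_commute {A : ι → Matrix m m 𝕜}
    (hA : ∀ k, (A k).IsHermitian) (hcomm : ∀ j k, Commute (A j) (A k)) :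
    ∃ b : OrthonormalBasis m 𝕜 (EuclideanSpace 𝕜 m), ∀ k i, ∃ μ : 𝕜, A k *ᵥ b i = μ • b i := by
  classical
  have hT : ∀ k, (toEuclideanLin (A k)).IsSymmetric :=
    fun k => isSymmetric_toEuclideanLin_iff.mpr (hA k)
  set V : (ι → 𝕜) → Submodule 𝕜 (EuclideanSpace 𝕜 m) :=
    fun χ => ⨅ k, Module.End.eigenspace (toEuclideanLin (A k)) (χ k)
  have hV : DirectSum.IsInternal V :=
    LinearMap.IsSymmetric.directSum_isInternal_of_pairwise_commute hT
      fun j k _ => (hcomm j k).toEuclideanLin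
  have : Fintype {χ // V χ ≠ ⊥} :=
    (WellFoundedGT.finite_ne_bot_of_iSupIndep hV.submodule_iSupIndep).fintype
  have hV' := DirectSum.isInternal_ne_bot_iff.mpr hV
  have hO := (LinearMap.IsSymmetric.orthogonalFamily_iInf_eigenspaces hT).comp
    (Subtype.val_injective (p := fun χ => V χ ≠ ⊥))
  have hn := finrank_euclideanSpace (𝕜 := 𝕜) (ι := m)
  let b := (hV'.subordinateOrthonormalBasis hn hO).reindex (Fintype.equivFin m).symm
  refine ⟨b, fun k i =>
    ⟨(hV'.subordinateOrthonormalBasisIndex hn (Fintype.equivFin m i) hO).1 k, ?_⟩⟩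
  have hmem := hV'.subordinateOrthonormalBasis_subordinate hn (Fintype.equivFin m i) hO
  have := Module.End.mem_eigenspace_iff.mp (Submodule.mem_iInf _ |>.mp hmem k)
  simpa [b, toLpLin_apply] using congrArg WithLp.ofLp this

theorem exists_unitary_eq_mul_diagonal_mul_star_of_commute {A : ι → Matrix m m 𝕜}
    (hA : ∀ k, (A k).IsHermitian) (hcomm : ∀ j k, Commute (A j) (A k)) :
    ∃ U ∈ unitaryGroup m 𝕜, ∀ k, ∃ d : m → 𝕜, A k = U * diagonal d * star U := by
  obtain ⟨b, hb⟩ := exists_orthonormalBasis_mulVec_eq_smul_of_commute hA hcomm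
  choose μ hμ using hb
  let U := (EuclideanSpace.basisFun m 𝕜).toBasis.toMatrix b
  have hU : U ∈ unitaryGroup m 𝕜 :=
    (EuclideanSpace.basisFun m 𝕜).toMatrix_orthonormalBasis_mem_unitary b
  refine ⟨U, hU, fun k => ⟨μ k, ?_⟩⟩
  have hAU : A k * U = U * diagonal (μ k) := by
    ext a i
    rw [mul_diagonal]
    simpa [mul_apply, mulVec, dotProduct, U, Module.Basis.toMatrix_apply, mul_comm] using
      congrFun (hμ k i) a
  rw [← hAU, Matrix.mul_assoc, mem_unitaryGroup_iff.mp hU, Matrix.mul_one]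

end SimultaneousDiagonalization

theorem commute_of_sum_mul_self_eq_one {𝕜 ι m : Type*} [RCLike 𝕜] [Fintype ι] [Fintype m]
    [DecidableEq m] {A : ι → Matrix m m 𝕜} (hA : ∀ k, (A k).IsHermitian)
    (hsq : ∑ k, A k * A k = 1) (hsand : ∀ j, ∑ k, A k * A j * A k = A j) (j l : ι) :
    Commute (A j) (A l) := by
  let C : ι → Matrix m m 𝕜 := fun k => A k * A l - A l * A k
  have hC : ∀ k, (C k)ᴴ * C k = A l * (A k * A k) * A l - A l * (A k * A l * A k)
      - (A k * A l * A k) * A l + A k * (A l * A l) * A k := fun k => by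
    simp only [C, conjTranspose_sub, conjTranspose_mul, (hA _).eq]
    noncomm_ring
  have hsum : ∑ k, ((C k)ᴴ * C k).trace = 0 := by
    have hcyc : ∀ k, (A k * (A l * A l) * A k).trace = (A l * A l * (A k * A k)).trace :=
      fun k => by rw [trace_mul_comm, ← Matrix.mul_assoc, trace_mul_comm]
    simp only [hC, trace_add, trace_sub, Finset.sum_add_distrib, Finset.sum_sub_distrib, hcyc]
    simp only [← trace_sum, ← Finset.mul_sum, ← Finset.sum_mul, hsq, hsand, Matrix.mul_one]
    ring
  have hzero := (Finset.sum_eq_zero_iff_of_nonneg fun k _ =>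
    (posSemidef_conjTranspose_mul_self (C k)).trace_nonneg).mp hsum j (Finset.mem_univ j)
  exact sub_eq_zero.mp (trace_conjTranspose_mul_self_eq_zero_iff.mp hzero)

section RankOneProjections

variable {R m : Type*} [CommRing R] [Fintype m] [DecidableEq m] {U : Matrix m m R}

theorem dotProduct_eq_of_transpose_mul_eq_one (hU : Uᵀ * U = 1) (i j : m) :
    Uᵀ i ⬝ᵥ Uᵀ j = if i = j then 1 else 0 := by
  rw [← one_apply, ← hU, mul_apply']
  rfl

theorem vecMulVec_mul_vecMulVec_of_transpose_mul_eq_one (hU : Uᵀ * U = 1) (i j : m) :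
    vecMulVec (Uᵀ i) (Uᵀ i) * vecMulVec (Uᵀ j) (Uᵀ j) =
      if i = j then vecMulVec (Uᵀ i) (Uᵀ i) else 0 := by
  rw [vecMulVec_mul_vecMulVec, dotProduct_eq_of_transpose_mul_eq_one hU]
  split_ifs with h
  · rw [h, one_smul]
  · rw [zero_smul, vecMulVec_zero]

theorem sum_vecMulVec_of_transpose_mul_eq_one (hU : Uᵀ * U = 1) :
    ∑ i, vecMulVec (Uᵀ i) (Uᵀ i) = 1 := by
  rw [← mul_eq_one_comm.mp hU]
  ext a b
  simp [Matrix.sum_apply, vecMulVec_apply, mul_apply]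

theorem mul_diagonal_mul_transpose_eq_sum_vecMulVec (d : m → R) :
    U * diagonal d * Uᵀ = ∑ i, d i • vecMulVec (Uᵀ i) (Uᵀ i) := by
  ext a b
  rw [mul_apply]
  simp only [mul_diagonal, transpose_apply, Matrix.sum_apply, smul_apply, vecMulVec_apply,
    smul_eq_mul]
  exact Finset.sum_congr rfl fun i _ => by ring

theorem of_vec_vecMulVec_mul_transpose_eq_one (hU : Uᵀ * U = 1) :
    (of fun i => vec (vecMulVec (Uᵀ i) (Uᵀ i))) * (of fun i => vec (vecMulVec (Uᵀ i) (Uᵀ i)))ᵀ = 1 := by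
  ext i j
  rw [mul_apply']
  change vec (vecMulVec (Uᵀ i) (Uᵀ i)) ⬝ᵥ vec (vecMulVec (Uᵀ j) (Uᵀ j)) = _
  rw [vec_dotProduct_vec, transpose_vecMulVec, vecMulVec_mul_vecMulVec_of_transpose_mul_eq_one hU]
  split_ifs with h
  · rw [h, trace_vecMulVec, dotProduct_eq_of_transpose_mul_eq_one hU, if_pos rfl, one_apply_eq]
  · rw [trace_zero, one_apply_ne h]

end RankOneProjections

theorem transpose_mul_self_eq_of_eq_mul {R m n : Type*} [CommRing R] [Fintype m] [DecidableEq m]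
    [Fintype n] {W V : Matrix m n R} {Λ : Matrix m m R} (hW : W * Wᵀ = 1) (hV : V * Vᵀ = 1)
    (h : W = Λ * V) : Wᵀ * W = Vᵀ * V := by
  have hΛ : Λ * Λᵀ = 1 := by
    rw [← hW, h, transpose_mul, Matrix.mul_assoc, ← Matrix.mul_assoc V, hV, Matrix.one_mul]
  rw [h, transpose_mul, Matrix.mul_assoc, ← Matrix.mul_assoc Λᵀ, mul_eq_one_comm.mp hΛ,
    Matrix.one_mul]

section Vectorization

variable {R m n κ : Type*}

-- The inverse of Mathlib's column-stacking `Matrix.vec`, which is the map `X` of the paper.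
def unvec (w : n × m → R) : Matrix m n R := of fun i j => w (j, i)

-- `Q (v 0, v 2) (v 1, v 3)` is entry `(v₂, v₃)` of the block `Q_{v₀v₁}`, i.e. the tensor entry
-- `Q_{v₀v₁v₂v₃}`; invariance under every `T_σ` means this array is invariant under permuting `v`.
def IsFullySymmetric (Q : Matrix (m × m) (m × m) R) : Prop :=
  ∀ (σ : Equiv.Perm (Fin 4)) (v : Fin 4 → m),
    Q (v 0, v 2) (v 1, v 3) = Q (v (σ 0), v (σ 2)) (v (σ 1), v (σ 3))

theorem IsFullySymmetric.transpose_eq {Q : Matrix (m × m) (m × m) R} (hQ : IsFullySymmetric Q) :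
    Qᵀ = Q := by
  ext ⟨a, c⟩ ⟨b, d⟩
  simpa [Equiv.swap_apply_def] using
    (hQ ((Equiv.swap 0 1).trans (Equiv.swap 2 3)) ![a, b, c, d]).symm

theorem IsFullySymmetric.apply_swap_left {Q : Matrix (m × m) (m × m) R}
    (hQ : IsFullySymmetric Q) (a c : m) (q : m × m) : Q (c, a) q = Q (a, c) q := by
  simpa [Equiv.swap_apply_def] using (hQ (Equiv.swap 0 2) ![a, q.1, c, q.2]).symm

theorem IsFullySymmetric.apply_cycle {Q : Matrix (m × m) (m × m) R} (hQ : IsFullySymmetric Q)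
    (a b c d : m) : Q (b, a) (d, c) = Q (d, a) (c, b) := by
  simpa [Equiv.swap_apply_def] using hQ ((Equiv.swap 0 1).trans (Equiv.swap 0 3)) ![b, d, a, c]

variable [CommRing R] [Fintype m] {W : Matrix κ (m × m) R}

theorem eq_mul_of_unvec_eq [DecidableEq m] {U : Matrix m m R} {d : κ → m → R}
    (hd : ∀ k, unvec (W k) = U * diagonal (d k) * Uᵀ) :
    W = of d * of fun i => vec (vecMulVec (Uᵀ i) (Uᵀ i)) := by
  ext k p
  calc W k p = vec (unvec (W k)) p := rfl
    _ = _ := by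
      rw [hd, mul_diagonal_mul_transpose_eq_sum_vecMulVec, vec_sum, mul_apply]
      simp [vec_smul]

variable [Fintype κ]

theorem sum_unvec_mul_unvec_eq_one [DecidableEq m] (hsym : IsFullySymmetric (Wᵀ * W))
    (htr : ∀ i j, ∑ r, (Wᵀ * W) (i, r) (j, r) = if i = j then 1 else 0) :
    ∑ k, unvec (W k) * unvec (W k) = 1 := by
  ext i j
  rw [one_apply, ← htr]
  simp only [sum_apply, mul_apply, unvec, of_apply, transpose_apply, ← hsym.apply_swap_left i]
  exact Finset.sum_comm

variable [DecidableEq κ]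

theorem sum_transpose_mul_self_apply_mul (hW : W * Wᵀ = 1) (k : κ) (p : m × m) :
    ∑ q, (Wᵀ * W) p q * W k q = W k p := by
  have h : Wᵀ * W * Wᵀ = Wᵀ := by rw [Matrix.mul_assoc, hW, Matrix.mul_one]
  simpa only [mul_apply, transpose_apply] using congrFun (congrFun h p) k

theorem transpose_unvec (hW : W * Wᵀ = 1) (hsym : IsFullySymmetric (Wᵀ * W)) (k : κ) :
    (unvec (W k))ᵀ = unvec (W k) := by
  ext i j
  calc W k (i, j) = ∑ q, (Wᵀ * W) (i, j) q * W k q :=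
        (sum_transpose_mul_self_apply_mul hW k _).symm
    _ = ∑ q, (Wᵀ * W) (j, i) q * W k q := by simp only [hsym.apply_swap_left]
    _ = W k (j, i) := sum_transpose_mul_self_apply_mul hW k _

theorem sum_unvec_mul_mul_unvec (hW : W * Wᵀ = 1) (hsym : IsFullySymmetric (Wᵀ * W)) (j : κ) :
    ∑ k, unvec (W k) * unvec (W j) * unvec (W k) = unvec (W j) := by
  ext a d
  calc (∑ k, unvec (W k) * unvec (W j) * unvec (W k)) a d
      = ∑ c, ∑ b, (Wᵀ * W) (b, a) (d, c) * W j (c, b) := by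
        simp only [sum_apply, mul_apply, unvec, of_apply, transpose_apply, Finset.sum_mul]
        rw [Finset.sum_comm]
        refine Finset.sum_congr rfl fun c _ => ?_
        rw [Finset.sum_comm]
        exact Finset.sum_congr rfl fun b _ => Finset.sum_congr rfl fun k _ => by ring
    _ = ∑ q, (Wᵀ * W) (d, a) q * W j q := by
        simp only [hsym.apply_cycle, Fintype.sum_prod_type]
    _ = W j (d, a) := sum_transpose_mul_self_apply_mul hW j _

end Vectorization

end Matrix

theorem stmt17 (n : ℕ) (Q : Matrix (Fin n × Fin n) (Fin n × Fin n) ℝ)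
    (hsym : ∀ (σ : Equiv.Perm (Fin 4)) (v : Fin 4 → Fin n),
      Q (v 0, v 2) (v 1, v 3) = Q (v (σ 0), v (σ 2)) (v (σ 1), v (σ 3)))
    (htr : ∀ i j : Fin n, (∑ r : Fin n, Q (i, r) (j, r)) = if i = j then (1 : ℝ) else 0)
    (hproj : Q * Q = Q) :
    ∃ P : Fin n → Matrix (Fin n) (Fin n) ℝ,
      (∀ j, (P j)ᵀ = P j) ∧ (∀ j, P j * P j = P j) ∧
      (∀ j, (P j).trace = 1) ∧
      (∀ j k, P j * P k = if j = k then P j else 0) ∧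
      (∑ j : Fin n, P j) = 1 ∧
      (∀ p q : Fin n × Fin n, Q p q = ∑ k : Fin n, P k p.2 p.1 * P k q.2 q.1) := by
  have hQsym : IsFullySymmetric Q := hsym
  have hQ : Q.IsHermitian := (conjTranspose_eq_transpose_of_trivial Q).trans hQsym.transpose_eq
  have htrace : Q.trace = Fintype.card (Fin n) := by
    simp [trace, Fintype.sum_prod_type, htr]
  obtain ⟨W, hW, rfl⟩ := hQ.exists_mul_conjTranspose_eq_one hproj htrace
  rw [conjTranspose_eq_transpose_of_trivial] at hW hQsym htr ⊢
  have hA : ∀ k, (unvec (W k)).IsHermitian := fun k =>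
    (conjTranspose_eq_transpose_of_trivial _).trans (transpose_unvec hW hQsym k)
  obtain ⟨U, hU, hdiag⟩ := exists_unitary_eq_mul_diagonal_mul_star_of_commute hA
    (commute_of_sum_mul_self_eq_one hA (sum_unvec_mul_unvec_eq_one hQsym htr)
      (sum_unvec_mul_mul_unvec hW hQsym))
  choose d hd using hdiag
  have hUT : star U = Uᵀ := (star_eq_conjTranspose U).trans (conjTranspose_eq_transpose_of_trivial U)
  have hUU : Uᵀ * U = 1 := hUT ▸ mem_unitaryGroup_iff'.mp hU
  have hAO : ∀ k, unvec (W k) = U * diagonal (d k) * Uᵀ := fun k => hUT ▸ hd k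
  refine ⟨fun i => vecMulVec (Uᵀ i) (Uᵀ i), fun i => transpose_vecMulVec _ _,
    fun i => by simpa using vecMulVec_mul_vecMulVec_of_transpose_mul_eq_one hUU i i,
    fun i => by rw [trace_vecMulVec, dotProduct_eq_of_transpose_mul_eq_one hUU, if_pos rfl],
    vecMulVec_mul_vecMulVec_of_transpose_mul_eq_one hUU, sum_vecMulVec_of_transpose_mul_eq_one hUU,
    fun p q => ?_⟩
  rw [transpose_mul_self_eq_of_eq_mul hW (of_vec_vecMulVec_mul_transpose_eq_one hUU)
    (eq_mul_of_unvec_eq hAO), mul_apply]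
  rfl
end
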